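/- If a vertex i2 belongs to community C(i), does not share an edge with vertex i, and vertex i (with weighted degree d(i) > 0) leaves community C(i) to join community C(j*), then the modularity gain of moving i2 to C(j*) strictly decreases; specifically, the new gain equals the old gain minus 2·d(i2)·d(i)/(2m)², where d(i2) > 0 is the weighted degree of i2 and m is the total edge weight. -/

import Mathlib

open Finset

namespace DynCD

variable {V : Type*} [Fintype V] [DecidableEq V]

/-- Weighted degree of a vertex. -/
noncomputable def deg (w : V → V → ℝ) (v : V) : ℝ := ∑ u, w v u

/-- Total weight of edges from `v` into the community `C`. -/
noncomputable def eTo (w : V → V → ℝ) (v : V) (C : Finset V) : ℝ := ∑ u ∈ C, w v u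

/-- Sum of the weighted degrees of the vertices of `C`. -/
noncomputable def aOf (w : V → V → ℝ) (C : Finset V) : ℝ := ∑ v ∈ C, deg w v

/-- Modularity gain of moving `v` from its community `Cv` to the community `C`:
`ΔQ_{v→C} = (e_{v→C} − e_{v→Cv∖{v}})/(2m) + (d(v)·a_{Cv∖{v}} − d(v)·a_C)/(2m)²`. -/
noncomputable def gain (w : V → V → ℝ) (m : ℝ) (v : V) (Cv C : Finset V) : ℝ :=
  (eTo w v C - eTo w v (Cv.erase v)) / (2 * m)
    + (deg w v * aOf w (Cv.erase v) - deg w v * aOf w C) / (2 * m) ^ 2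

/-- Modularity of the set of communities `P` with community assignment `Cfun`:
`Q = (1/2m)·(Σ_v e_{v→C(v)} − (1/2m)·Σ_{C∈P} a_C²)`. -/
noncomputable def modularity (w : V → V → ℝ) (m : ℝ)
    (P : Finset (Finset V)) (Cfun : V → Finset V) : ℝ :=
  (1 / (2 * m)) * ((∑ v, eTo w v (Cfun v)) - (1 / (2 * m)) * ∑ C ∈ P, (aOf w C) ^ 2)

/-- Total weight of the edges inside `C` (each unordered edge counted once). -/
noncomputable def inW (w : V → V → ℝ) (C : Finset V) : ℝ :=
  (1 / 2) * ∑ v ∈ C, ∑ u ∈ C, w v u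

/-- The new set of communities after moving `v` from community `Cv` to community `C`. -/
def moveP (P : Finset (Finset V)) (Cv C : Finset V) (v : V) : Finset (Finset V) :=
  insert (insert v C) (insert (Cv.erase v) ((P.erase Cv).erase C))

/-- The new community assignment after moving `v` from community `Cv` to community `C`. -/
def moveC (Cfun : V → Finset V) (Cv C : Finset V) (v : V) : V → Finset V :=
  fun u => if u = v then insert v C
    else if Cfun u = Cv then Cv.erase v
    else if Cfun u = C then insert v C else Cfun u

/-- `(P, Cfun)` forms a partition of the vertex set into communities. -/
def IsPartition (P : Finset (Finset V)) (Cfun : V → Finset V) : Prop :=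
  (∀ v : V, Cfun v ∈ P ∧ v ∈ Cfun v) ∧ (∀ C ∈ P, ∀ u ∈ C, Cfun u = C)

omit [Fintype V] in
theorem eTo_insert_of_eq_zero (w : V → V → ℝ) {v u : V} (C : Finset V) (h : w v u = 0) :
    eTo w v (insert u C) = eTo w v C := by
  by_cases hu : u ∈ C
  · rw [insert_eq_of_mem hu]
  · rw [eTo, sum_insert hu, h, zero_add, eTo]

omit [Fintype V] in
theorem eTo_erase_of_eq_zero (w : V → V → ℝ) {v u : V} (C : Finset V) (h : w v u = 0) :
    eTo w v (C.erase u) = eTo w v C :=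
  sum_erase C h

theorem aOf_insert (w : V → V → ℝ) {u : V} {C : Finset V} (hu : u ∉ C) :
    aOf w (insert u C) = deg w u + aOf w C :=
  sum_insert hu

theorem aOf_erase (w : V → V → ℝ) {u : V} {C : Finset V} (hu : u ∈ C) :
    aOf w (C.erase u) = aOf w C - deg w u :=
  sum_erase_eq_sub hu

/- The edge terms of `v`'s gain do not see `u`; the degree terms lose `d(v)·d(u)/(2m)²` twice,
once because `a_{Cv∖{v}}` shrinks by `d(u)` and once because `a_C` grows by `d(u)`. -/
theorem gain_after_move_of_eq_zero (w : V → V → ℝ) (m : ℝ) {u v : V} {Cv C : Finset V}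
    (hu : u ∈ Cv) (hvu : v ≠ u) (hw : w v u = 0) (huC : u ∉ C) :
    gain w m v (Cv.erase u) (insert u C)
      = gain w m v Cv C - 2 * deg w v * deg w u / (2 * m) ^ 2 := by
  have hu' : u ∈ Cv.erase v := mem_erase.2 ⟨hvu.symm, hu⟩
  rw [gain, gain, erase_right_comm, eTo_insert_of_eq_zero w C hw, eTo_erase_of_eq_zero w _ hw,
    aOf_erase w hu', aOf_insert w huC]
  ring

theorem stmt0_general (w : V → V → ℝ) (m : ℝ) (hm : 0 < m)
    (i i2 : V) (Ci Cj : Finset V)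
    (hiCi : i ∈ Ci) (hne : i2 ≠ i)
    (hnoedge2 : w i2 i = 0)
    (hiCj : i ∉ Cj)
    (hdi : 0 < deg w i) (hdi2 : 0 < deg w i2) :
    gain w m i2 (Ci.erase i) (insert i Cj)
        = gain w m i2 Ci Cj - 2 * deg w i2 * deg w i / (2 * m) ^ 2 ∧
      gain w m i2 (Ci.erase i) (insert i Cj) < gain w m i2 Ci Cj := by
  have hgain := gain_after_move_of_eq_zero w m hiCi hne hnoedge2 hiCj
  have hdrop : 0 < 2 * deg w i2 * deg w i / (2 * m) ^ 2 := by positivity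
  exact ⟨hgain, by linarith⟩

/-- Lemma 3.2 (expanded): if `i2 ∈ C(i)`, `i2` not adjacent to `i`, and `i` (with
positive weighted degree) leaves `C(i)` to join `C(j*)`, then the modularity gain of
moving `i2` to `C(j*)` strictly decreases, by exactly `2·d(i2)·d(i)/(2m)²`. -/
theorem stmt0 (w : V → V → ℝ) (m : ℝ) (hm : 0 < m)
    (i i2 : V) (Ci Cj : Finset V)
    (hiCi : i ∈ Ci) (hi2Ci : i2 ∈ Ci) (hne : i2 ≠ i)
    (hnoedge1 : w i i2 = 0) (hnoedge2 : w i2 i = 0)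
    (hiCj : i ∉ Cj)
    (hdi : 0 < deg w i) (hdi2 : 0 < deg w i2) :
    gain w m i2 (Ci.erase i) (insert i Cj)
        = gain w m i2 Ci Cj - 2 * deg w i2 * deg w i / (2 * m) ^ 2 ∧
      gain w m i2 (Ci.erase i) (insert i Cj) < gain w m i2 Ci Cj :=
  stmt0_general w m hm i i2 Ci Cj hiCi hne hnoedge2 hiCj hdi hdi2

end DynCD
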